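/- For jointly Gaussian real random variables (X, Y) with mean zero, Var(X) = σ² > 0, E[sign(X)·Y] = √(2/(πσ²))·E[X·Y] (Bussgang's theorem for the one-bit quantizer). -/

import Mathlib

/-!
Write `X = σ Z₁` and `Y = a Z₁ + b Z₂` with `Z₁, Z₂` independent standard Gaussians. Since
`Z₂` is centered and independent of `Z₁`, `E[h(Z₁) Y] = a E[h(Z₁) Z₁]` for every `h`.
For `h(x) = sign(σ x)` this is `a E|Z₁| = a √(2/π)`, and for `h(x) = σ x` it is
`a σ E[Z₁²] = a σ`.
-/

open MeasureTheory ProbabilityTheory Real Set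

namespace Real

lemma sign_eq_coe_sign (r : ℝ) : Real.sign r = (SignType.sign r : ℝ) := by
  rcases lt_trichotomy r 0 with h | rfl | h
  · simp [Real.sign_of_neg h, _root_.sign_neg h]
  · simp [Real.sign_zero]
  · simp [Real.sign_of_pos h, _root_.sign_pos h]

lemma sign_mul_self (r : ℝ) : Real.sign r * r = |r| := by
  rw [sign_eq_coe_sign, _root_.sign_mul_self]

lemma sign_mul_of_pos {c : ℝ} (hc : 0 < c) (r : ℝ) : Real.sign (c * r) = Real.sign r := by
  rw [sign_eq_coe_sign, sign_eq_coe_sign, _root_.sign_mul, _root_.sign_pos hc, one_mul]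

lemma abs_sign_le_one (r : ℝ) : |Real.sign r| ≤ 1 := by
  rcases Real.sign_apply_eq r with h | h | h <;> simp [h]

lemma monotone_sign : Monotone Real.sign := by
  intro x y hxy
  simp only [Real.sign]
  split_ifs <;> linarith

lemma measurable_sign : Measurable Real.sign := monotone_sign.measurable

end Real

lemma integral_Ioi_mul_exp_neg_mul_sq {b : ℝ} (hb : 0 < b) :
    ∫ r in Ioi (0 : ℝ), r * exp (-b * r ^ 2) = (2 * b)⁻¹ := by
  apply Complex.ofReal_injective
  rw [← integral_complex_ofReal]
  push_cast
  exact integral_mul_cexp_neg_mul_sq (by simpa using hb)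

lemma integral_abs_gaussianReal {v : NNReal} (hv : v ≠ 0) :
    ∫ x, |x| ∂gaussianReal 0 v = √(2 * v / π) := by
  let g : ℝ → ℝ := fun x => (√(2 * π * v))⁻¹ * (x * exp (-(2 * (v : ℝ))⁻¹ * x ^ 2))
  have hpdf : ∀ x, gaussianPDFReal 0 v x • |x| = g |x| := by
    intro x
    simp only [g, gaussianPDFReal_def, smul_eq_mul, sq_abs, sub_zero]
    rw [neg_div, div_eq_inv_mul, neg_mul]
    ring
  rw [integral_gaussianReal_eq_integral_smul hv, integral_congr_ae (ae_of_all _ hpdf),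
    integral_comp_abs, integral_const_mul, integral_Ioi_mul_exp_neg_mul_sq (by positivity),
    eq_comm, Real.sqrt_eq_iff_mul_self_eq_of_pos (by positivity)]
  field_simp
  rw [Real.sq_sqrt (by positivity)]

lemma integral_sq_gaussianReal (v : NNReal) : ∫ x, x ^ 2 ∂gaussianReal 0 v = v := by
  rw [← variance_of_integral_eq_zero aemeasurable_id' integral_id_gaussianReal,
    variance_fun_id_gaussianReal]

lemma integrable_id_gaussianReal (m : ℝ) (v : NNReal) :
    Integrable (fun x => x) (gaussianReal m v) :=
  (memLp_id_gaussianReal 1).integrable le_rfl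

lemma integrable_sq_gaussianReal (m : ℝ) (v : NNReal) :
    Integrable (fun x => x ^ 2) (gaussianReal m v) :=
  (memLp_id_gaussianReal 2).integrable_sq

lemma integral_prod_comp_fst_mul_add_mul_snd {μ ν : Measure ℝ} [SFinite μ]
    [IsProbabilityMeasure ν]
    {h : ℝ → ℝ} (hh : Integrable h μ) (hhx : Integrable (fun x => h x * x) μ)
    (hν : Integrable (fun y => y) ν) (hν0 : ∫ y, y ∂ν = 0) (a b : ℝ) :
    ∫ p, h p.1 * (a * p.1 + b * p.2) ∂μ.prod ν = a * ∫ x, h x * x ∂μ := by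
  have hsplit : (fun p : ℝ × ℝ => h p.1 * (a * p.1 + b * p.2))
      = fun p => a * (h p.1 * p.1) + b * (h p.1 * p.2) := by
    funext p; ring
  rw [hsplit, integral_add ((hhx.comp_fst ν).const_mul a) ((hh.mul_prod hν).const_mul b),
    integral_const_mul, integral_const_mul, integral_fun_fst (fun x => h x * x),
    integral_prod_mul h (fun y => y), hν0]
  simp

/-- Bussgang's theorem for the one-bit quantizer: for a centered jointly Gaussian pair
(X, Y) (represented as linear combinations of two independent standard Gaussians) with
Var(X) = σ² > 0, E[sign(X)·Y] = √(2/(πσ²))·E[X·Y]. -/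
theorem stmt3 (σ a b : ℝ) (hσ : 0 < σ)
    (μ : Measure (ℝ × ℝ)) (hμ : μ = (gaussianReal 0 1).prod (gaussianReal 0 1))
    (X Y : ℝ × ℝ → ℝ)
    (hX : ∀ p, X p = σ * p.1) (hY : ∀ p, Y p = a * p.1 + b * p.2) :
    ∫ p, Real.sign (X p) * Y p ∂μ =
      Real.sqrt (2 / (Real.pi * σ ^ 2)) * ∫ p, X p * Y p ∂μ := by
  subst hμ
  simp only [hX, hY]
  have hZ := integrable_id_gaussianReal (0 : ℝ) 1
  have hsign_abs : ∀ x, Real.sign (σ * x) * x = |x| := fun x => by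
    rw [Real.sign_mul_of_pos hσ, Real.sign_mul_self]
  have hsign : Integrable (fun x => Real.sign (σ * x)) (gaussianReal 0 1) :=
    (integrable_const 1).mono'
      (Real.measurable_sign.comp (measurable_const_mul σ)).aestronglyMeasurable
      (ae_of_all _ fun x => Real.abs_sign_le_one _)
  rw [integral_prod_comp_fst_mul_add_mul_snd hsign (by simpa only [hsign_abs] using hZ.abs) hZ
      integral_id_gaussianReal,
    integral_prod_comp_fst_mul_add_mul_snd (hZ.const_mul σ)
      (by simpa only [mul_assoc, ← sq] using (integrable_sq_gaussianReal 0 1).const_mul σ) hZ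
      integral_id_gaussianReal]
  simp only [hsign_abs, integral_abs_gaussianReal one_ne_zero, mul_assoc, ← sq,
    integral_const_mul, integral_sq_gaussianReal, NNReal.coe_one, mul_one]
  rw [show 2 / (π * σ ^ 2) = 2 / π / σ ^ 2 by ring,
    Real.sqrt_div' _ (sq_nonneg σ), Real.sqrt_sq hσ.le]
  field_simp
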